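/- arXiv:2110.12437 — 2 statements merged into one kernel-verified Lean document; each statement's English description precedes it below -/
import Mathlib

section
/- Let K be a linear map with operator norm ‖K‖, and let τ₁, τ₂ > 0 satisfy τ₁τ₂‖K‖² < 1. Define ‖(u,y)‖²_{τ₁τ₂} = ‖u‖²/τ₁ + ‖y‖²/τ₂ - 2⟨Ku, y⟩. Then for all (u,y), ‖u‖² + ‖y‖² ≤ (τ₁ + τ₂)/(1 - τ₁τ₂‖K‖²) · ‖(u,y)‖²_{τ₁τ₂}. -/
/-- Multiplied by `τ₁ τ₂`, the difference of the two sides is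
`(a τ₂ - b τ₁ τ₂ k)² + (b τ₁ - a τ₁ τ₂ k)²`. -/
theorem one_sub_mul_sq_add_sq_le {τ₁ τ₂ : ℝ} (hτ₁ : 0 < τ₁) (hτ₂ : 0 < τ₂) (k a b : ℝ) :
    (1 - τ₁ * τ₂ * k ^ 2) * (a ^ 2 + b ^ 2) ≤
      (τ₁ + τ₂) * (a ^ 2 / τ₁ + b ^ 2 / τ₂ - 2 * (k * a * b)) := by
  have hsos : τ₁ * τ₂ * ((τ₁ + τ₂) * (a ^ 2 / τ₁ + b ^ 2 / τ₂ - 2 * (k * a * b)) -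
      (1 - τ₁ * τ₂ * k ^ 2) * (a ^ 2 + b ^ 2)) =
      (a * τ₂ - b * τ₁ * τ₂ * k) ^ 2 + (b * τ₁ - a * τ₁ * τ₂ * k) ^ 2 := by
    field_simp
    ring
  have hdiff : 0 ≤ (τ₁ + τ₂) * (a ^ 2 / τ₁ + b ^ 2 / τ₂ - 2 * (k * a * b)) -
      (1 - τ₁ * τ₂ * k ^ 2) * (a ^ 2 + b ^ 2) :=
    nonneg_of_mul_nonneg_right (by rw [hsos]; positivity) (by positivity)
  linarith

theorem ContinuousLinearMap.inner_apply_le_opNorm_mul_mul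
    {E F : Type*} [SeminormedAddCommGroup E] [NormedSpace ℝ E]
    [SeminormedAddCommGroup F] [InnerProductSpace ℝ F] (K : E →L[ℝ] F) (u : E) (y : F) :
    inner ℝ (K u) y ≤ ‖K‖ * ‖u‖ * ‖y‖ :=
  (real_inner_le_norm _ _).trans (mul_le_mul_of_nonneg_right (K.le_opNorm u) (norm_nonneg y))

theorem stmt_1
    {E F : Type*} [NormedAddCommGroup E] [InnerProductSpace ℝ E]
    [NormedAddCommGroup F] [InnerProductSpace ℝ F]
    (K : E →L[ℝ] F) (τ₁ τ₂ : ℝ) (hτ₁ : 0 < τ₁) (hτ₂ : 0 < τ₂)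
    (hK : τ₁ * τ₂ * ‖K‖ ^ 2 < 1) :
    ∀ (u : E) (y : F),
      ‖u‖ ^ 2 + ‖y‖ ^ 2 ≤
        (τ₁ + τ₂) / (1 - τ₁ * τ₂ * ‖K‖ ^ 2) *
          (‖u‖ ^ 2 / τ₁ + ‖y‖ ^ 2 / τ₂ - 2 * inner ℝ (K u) y) := by
  intro u y
  rw [div_mul_eq_mul_div, le_div_iff₀ (sub_pos.mpr hK), mul_comm]
  calc (1 - τ₁ * τ₂ * ‖K‖ ^ 2) * (‖u‖ ^ 2 + ‖y‖ ^ 2)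
      ≤ (τ₁ + τ₂) * (‖u‖ ^ 2 / τ₁ + ‖y‖ ^ 2 / τ₂ - 2 * (‖K‖ * ‖u‖ * ‖y‖)) :=
        one_sub_mul_sq_add_sq_le hτ₁ hτ₂ _ _ _
    _ ≤ (τ₁ + τ₂) * (‖u‖ ^ 2 / τ₁ + ‖y‖ ^ 2 / τ₂ - 2 * inner ℝ (K u) y) := by
        gcongr
        exact K.inner_apply_le_opNorm_mul_mul u y
end

section
/- Suppose A : ℂ^N → ℂ^m satisfies: for every set Δ of an (s,M)-sparsity pattern and all x, ‖x_Δ‖₂ ≤ ρ‖x_{Δᶜ}‖_{ℓ¹_w}/√ξ + γ‖Ax‖₂, with 0 < ρ < 1, γ > 0. Then for all x, x̂ ∈ ℂ^N with Δ the (s,M)-support of the largest-in-levels entries of x: ‖x̂ - x‖_{ℓ¹_w} ≤ (1+ρ)/(1-ρ) · [‖x̂‖_{ℓ¹_w} - ‖x‖_{ℓ¹_w} + 2σ_{s,M}(x)_{ℓ¹_w} + 2γ√ξ/(1+ρ) · ‖A(x̂-x)‖₂]. -/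
open Finset

/-- weighted ℓ¹ norm with per-level weights -/
noncomputable def l1w {N r : ℕ} (w : Fin r → ℝ) (lvl : Fin N → Fin r)
    (x : Fin N → ℂ) : ℝ :=
  ∑ i, w (lvl i) * ‖x i‖

/-- Euclidean (ℓ²) norm of a finite complex vector -/
noncomputable def l2norm {N : ℕ} (x : Fin N → ℂ) : ℝ :=
  Real.sqrt (∑ i, ‖x i‖ ^ 2)

/-- a set Δ is an (s,M)-support set: at most s k indices in each level k -/
def IsSupportInLevels {N r : ℕ} (lvl : Fin N → Fin r) (s : Fin r → ℕ)
    (Δ : Finset (Fin N)) : Prop :=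
  ∀ k : Fin r, (Δ.filter (fun i => lvl i = k)).card ≤ s k

/-- a vector is (s,M)-sparse in levels -/
def IsSparseInLevels {N r : ℕ} (lvl : Fin N → Fin r) (s : Fin r → ℕ)
    (z : Fin N → ℂ) : Prop :=
  ∃ Δ : Finset (Fin N), IsSupportInLevels lvl s Δ ∧ ∀ i ∉ Δ, z i = 0

/-- distance to (s,M)-sparse vectors in the weighted ℓ¹ norm -/
noncomputable def sigmaSM {N r : ℕ} (w : Fin r → ℝ) (lvl : Fin N → Fin r)
    (s : Fin r → ℕ) (x : Fin N → ℂ) : ℝ :=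
  sInf {t : ℝ | ∃ z : Fin N → ℂ, IsSparseInLevels lvl s z ∧
    t = l1w w lvl (fun i => x i - z i)}

/-- weighted robust null space property in levels -/
def WeightedRNSPL {N r m : ℕ} (w : Fin r → ℝ) (lvl : Fin N → Fin r)
    (s : Fin r → ℕ) (A : (Fin N → ℂ) →ₗ[ℂ] (Fin m → ℂ)) (ρ γ ξ : ℝ) : Prop :=
  ∀ Δ : Finset (Fin N), IsSupportInLevels lvl s Δ →
    ∀ x : Fin N → ℂ,
      l2norm (fun i => if i ∈ Δ then x i else 0) ≤
        ρ * l1w w lvl (fun i => if i ∈ Δ then 0 else x i) / Real.sqrt ξ +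
          γ * l2norm (A x)

/-!
Split the error `v = x̂ - x` along a support set `Δ` carrying the largest weighted mass of `x`.
Cauchy–Schwarz turns the ℓ² bound of the null space property into the ℓ¹_w bound
`‖v_Δ‖ ≤ ρ ‖v_Δᶜ‖ + γ √ξ ‖A v‖`, the triangle inequality gives the cone bound
`‖v_Δᶜ‖ ≤ ‖x̂‖ - ‖x‖ + ‖v_Δ‖ + 2 ‖x_Δᶜ‖`, and maximality of `Δ` gives `‖x_Δᶜ‖ ≤ σ_{s,M}(x)`.
Eliminating `‖v_Δᶜ‖` between the two bounds yields the estimate.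
-/

lemma add_le_of_le_mul_add_of_le_add {a b c d ρ : ℝ} (hρ : -1 < ρ) (hρ1 : ρ < 1)
    (ha : a ≤ ρ * b + c) (hb : b ≤ d + a) :
    a + b ≤ (1 + ρ) / (1 - ρ) * (d + 2 * c / (1 + ρ)) := by
  have h1ρ : 0 < 1 - ρ := by linarith
  have h1ρ' : 0 < 1 + ρ := by linarith
  have hb' : (1 - ρ) * b ≤ d + c := by linarith
  rw [div_mul_eq_mul_div, le_div_iff₀ h1ρ, mul_add, mul_div_cancel₀ _ h1ρ'.ne']
  nlinarith

section WeightedL1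

variable {N r : ℕ} {w : Fin r → ℝ} {lvl : Fin N → Fin r}

/-- The paper's `‖x_Δ‖_{ℓ¹_w}`. -/
noncomputable def l1wOn (w : Fin r → ℝ) (lvl : Fin N → Fin r) (Δ : Finset (Fin N))
    (x : Fin N → ℂ) : ℝ :=
  ∑ i ∈ Δ, w (lvl i) * ‖x i‖

lemma l1wOn_add_l1wOn_compl (Δ : Finset (Fin N)) (x : Fin N → ℂ) :
    l1wOn w lvl Δ x + l1wOn w lvl Δᶜ x = l1w w lvl x :=
  sum_add_sum_compl Δ _

lemma l1w_ite_mem_zero (Δ : Finset (Fin N)) (x : Fin N → ℂ) :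
    l1w w lvl (fun i => if i ∈ Δ then 0 else x i) = l1wOn w lvl Δᶜ x := by
  simp only [l1w, l1wOn, apply_ite norm, norm_zero, mul_ite, mul_zero]
  rw [sum_ite, sum_const_zero, zero_add]
  congr 1
  ext i
  simp

lemma l2norm_ite_mem (Δ : Finset (Fin N)) (x : Fin N → ℂ) :
    l2norm (fun i => if i ∈ Δ then x i else 0) = √(∑ i ∈ Δ, ‖x i‖ ^ 2) := by
  simp only [l2norm, apply_ite norm, norm_zero, ite_pow, zero_pow two_ne_zero]
  rw [sum_ite_mem, univ_inter]

lemma l1wOn_le_l1w (hw : ∀ k, 0 ≤ w k) (Δ : Finset (Fin N)) (x : Fin N → ℂ) :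
    l1wOn w lvl Δ x ≤ l1w w lvl x :=
  sum_le_sum_of_subset_of_nonneg (subset_univ Δ) fun _ _ _ => mul_nonneg (hw _) (norm_nonneg _)

lemma l1wOn_nonneg (hw : ∀ k, 0 ≤ w k) (Δ : Finset (Fin N)) (x : Fin N → ℂ) :
    0 ≤ l1wOn w lvl Δ x :=
  sum_nonneg fun _ _ => mul_nonneg (hw _) (norm_nonneg _)

lemma l1wOn_sub_le (hw : ∀ k, 0 ≤ w k) (Δ : Finset (Fin N)) (x y : Fin N → ℂ) :
    l1wOn w lvl Δ (fun i => x i - y i) ≤ l1wOn w lvl Δ x + l1wOn w lvl Δ y := by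
  rw [l1wOn, l1wOn, l1wOn, ← sum_add_distrib]
  gcongr with i
  rw [← mul_add]
  exact mul_le_mul_of_nonneg_left (norm_sub_le _ _) (hw _)

lemma l1wOn_le_add_sub (hw : ∀ k, 0 ≤ w k) (Δ : Finset (Fin N)) (x y : Fin N → ℂ) :
    l1wOn w lvl Δ x ≤ l1wOn w lvl Δ y + l1wOn w lvl Δ (fun i => y i - x i) := by
  rw [l1wOn, l1wOn, l1wOn, ← sum_add_distrib]
  gcongr with i
  rw [← mul_add]
  exact mul_le_mul_of_nonneg_left (norm_le_norm_add_norm_sub _ _) (hw _)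

lemma l1wOn_compl_sub_le (hw : ∀ k, 0 ≤ w k) (Δ : Finset (Fin N)) (x xh : Fin N → ℂ) :
    l1wOn w lvl Δᶜ (fun i => xh i - x i) ≤
      l1w w lvl xh - l1w w lvl x + l1wOn w lvl Δ (fun i => xh i - x i) +
        2 * l1wOn w lvl Δᶜ x := by
  have hx_on := l1wOn_le_add_sub (lvl := lvl) hw Δ x xh
  have hv_off := l1wOn_sub_le (lvl := lvl) hw Δᶜ xh x
  have hx := l1wOn_add_l1wOn_compl (w := w) (lvl := lvl) Δ x
  have hxh := l1wOn_add_l1wOn_compl (w := w) (lvl := lvl) Δ xh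
  linarith

end WeightedL1

section SupportInLevels

variable {N r : ℕ} {w : Fin r → ℝ} {lvl : Fin N → Fin r} {s : Fin r → ℕ} {Δ : Finset (Fin N)}

lemma IsSupportInLevels.sum_sq_weight_le (hΔ : IsSupportInLevels lvl s Δ) :
    ∑ i ∈ Δ, w (lvl i) ^ 2 ≤ ∑ k, w k ^ 2 * s k := by
  rw [← sum_fiberwise Δ lvl]
  gcongr with k
  calc ∑ i ∈ Δ with lvl i = k, w (lvl i) ^ 2
      = ∑ _ ∈ {i ∈ Δ | lvl i = k}, w k ^ 2 := sum_congr rfl fun i hi => by rw [(mem_filter.1 hi).2]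
    _ = #{i ∈ Δ | lvl i = k} * w k ^ 2 := by rw [sum_const, nsmul_eq_mul]
    _ ≤ w k ^ 2 * s k := by rw [mul_comm]; gcongr; exact_mod_cast hΔ k

lemma IsSupportInLevels.l1wOn_le_sqrt_mul (hΔ : IsSupportInLevels lvl s Δ) (x : Fin N → ℂ) :
    l1wOn w lvl Δ x ≤ √(∑ k, w k ^ 2 * s k) * √(∑ i ∈ Δ, ‖x i‖ ^ 2) :=
  (Real.sum_mul_le_sqrt_mul_sqrt Δ _ _).trans <| by gcongr; exact hΔ.sum_sq_weight_le

lemma WeightedRNSPL.l1wOn_le {m : ℕ} {A : (Fin N → ℂ) →ₗ[ℂ] (Fin m → ℂ)} {ρ γ ξ : ℝ}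
    (hrnsp : WeightedRNSPL w lvl s A ρ γ ξ) (hw : ∀ k, 0 ≤ w k) (hρ : 0 ≤ ρ)
    (hξ : ξ = ∑ k, w k ^ 2 * s k) (hΔ : IsSupportInLevels lvl s Δ) (v : Fin N → ℂ) :
    l1wOn w lvl Δ v ≤ ρ * l1wOn w lvl Δᶜ v + γ * √ξ * l2norm (A v) := by
  have hCS := hΔ.l1wOn_le_sqrt_mul (w := w) v
  have hv := hrnsp Δ hΔ v
  rw [l2norm_ite_mem, l1w_ite_mem_zero] at hv
  rw [← hξ] at hCS
  rcases (Real.sqrt_nonneg ξ).eq_or_lt with hξ0 | hξ0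
  -- at `ξ = 0` the null space property divides by zero, but Cauchy–Schwarz alone gives `‖v_Δ‖ ≤ 0`
  · rw [← hξ0, zero_mul] at hCS
    rw [← hξ0, mul_zero, zero_mul, add_zero]
    exact hCS.trans (mul_nonneg hρ (l1wOn_nonneg hw _ _))
  · calc l1wOn w lvl Δ v
        ≤ √ξ * (ρ * l1wOn w lvl Δᶜ v / √ξ + γ * l2norm (A v)) := hCS.trans (by gcongr)
      _ = ρ * l1wOn w lvl Δᶜ v + γ * √ξ * l2norm (A v) := by field_simp

variable (w lvl s) in
lemma exists_isSupportInLevels_forall_l1wOn_le (x : Fin N → ℂ) :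
    ∃ Δ, IsSupportInLevels lvl s Δ ∧
      ∀ Δ', IsSupportInLevels lvl s Δ' → l1wOn w lvl Δ' x ≤ l1wOn w lvl Δ x := by
  classical
  obtain ⟨Δ, hΔ, hmax⟩ := exists_max_image {Δ | IsSupportInLevels lvl s Δ}
    (l1wOn w lvl · x) ⟨∅, mem_filter.2 ⟨mem_univ _, fun k => by simp⟩⟩
  exact ⟨Δ, (mem_filter.1 hΔ).2, fun Δ' hΔ' => hmax Δ' (mem_filter.2 ⟨mem_univ _, hΔ'⟩)⟩

lemma l1wOn_compl_le_sigmaSM (hw : ∀ k, 0 ≤ w k) {x : Fin N → ℂ}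
    (hmax : ∀ Δ', IsSupportInLevels lvl s Δ' → l1wOn w lvl Δ' x ≤ l1wOn w lvl Δ x) :
    l1wOn w lvl Δᶜ x ≤ sigmaSM w lvl s x := by
  refine le_csInf ⟨_, 0, ⟨∅, fun k => by simp, fun _ _ => rfl⟩, rfl⟩ ?_
  rintro _ ⟨z, ⟨Δ', hΔ', hz⟩, rfl⟩
  have hz' : l1wOn w lvl Δ'ᶜ x = l1wOn w lvl Δ'ᶜ (fun i => x i - z i) :=
    sum_congr rfl fun i hi => by simp only [hz i (mem_compl.1 hi), sub_zero]
  have hΔ'_le := hmax Δ' hΔ'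
  have hx := l1wOn_add_l1wOn_compl (w := w) (lvl := lvl) Δ x
  have hx' := l1wOn_add_l1wOn_compl (w := w) (lvl := lvl) Δ' x
  have hxz := l1wOn_le_l1w (lvl := lvl) hw Δ'ᶜ (fun i => x i - z i)
  linarith

end SupportInLevels

theorem stmt_7_general {N r m : ℕ} (w : Fin r → ℝ) (hw : ∀ k, 0 < w k)
    (lvl : Fin N → Fin r) (s : Fin r → ℕ)
    (A : (Fin N → ℂ) →ₗ[ℂ] (Fin m → ℂ)) (ρ γ : ℝ)
    (hρ : 0 < ρ) (hρ1 : ρ < 1)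
    (ξ : ℝ) (hξ : ξ = ∑ k, (w k) ^ 2 * (s k : ℝ))
    (hrnsp : WeightedRNSPL w lvl s A ρ γ ξ) :
    ∀ x xh : Fin N → ℂ,
      l1w w lvl (fun i => xh i - x i) ≤
        (1 + ρ) / (1 - ρ) *
          (l1w w lvl xh - l1w w lvl x + 2 * sigmaSM w lvl s x +
            2 * γ * Real.sqrt ξ / (1 + ρ) *
              l2norm (A (fun i => xh i - x i))) := by
  intro x xh
  have hw0 : ∀ k, 0 ≤ w k := fun k => (hw k).le
  obtain ⟨Δ, hΔ, hmax⟩ := exists_isSupportInLevels_forall_l1wOn_le w lvl s x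
  have hhead := hrnsp.l1wOn_le hw0 hρ.le hξ hΔ (fun i => xh i - x i)
  have htail := l1wOn_compl_sub_le (lvl := lvl) hw0 Δ x xh
  have hσ := l1wOn_compl_le_sigmaSM hw0 hmax
  rw [← l1wOn_add_l1wOn_compl Δ (fun i => xh i - x i)]
  calc _ ≤ (1 + ρ) / (1 - ρ) * (l1w w lvl xh - l1w w lvl x + 2 * sigmaSM w lvl s x +
          2 * (γ * √ξ * l2norm (A (fun i => xh i - x i))) / (1 + ρ)) :=
        add_le_of_le_mul_add_of_le_add (by linarith) hρ1 hhead (by linarith)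
    _ = _ := by ring

theorem stmt_7 {N r m : ℕ} (w : Fin r → ℝ) (hw : ∀ k, 0 < w k)
    (lvl : Fin N → Fin r) (s : Fin r → ℕ)
    (A : (Fin N → ℂ) →ₗ[ℂ] (Fin m → ℂ)) (ρ γ : ℝ)
    (hρ : 0 < ρ) (hρ1 : ρ < 1) (hγ : 0 < γ)
    (ξ : ℝ) (hξ : ξ = ∑ k, (w k) ^ 2 * (s k : ℝ))
    (hrnsp : WeightedRNSPL w lvl s A ρ γ ξ) :
    ∀ x xh : Fin N → ℂ,
      l1w w lvl (fun i => xh i - x i) ≤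
        (1 + ρ) / (1 - ρ) *
          (l1w w lvl xh - l1w w lvl x + 2 * sigmaSM w lvl s x +
            2 * γ * Real.sqrt ξ / (1 + ρ) *
              l2norm (A (fun i => xh i - x i))) :=
  stmt_7_general w hw lvl s A ρ γ hρ hρ1 ξ hξ hrnsp
end
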